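/- arXiv:2212.06941 — 6 statements merged into one kernel-verified Lean document; each statement's English description precedes it below -/
import Mathlib

section
/- Let Γ be a rooted tree with edge set E and positive edge lengths t : E → ℝ, and suppose the pair (Γ, t) minimizes P₂ over all rooted trees with the same number of edges together with all assignments of the same multiset of lengths {t_e : e ∈ E} to their edges. Then every vertex of Γ other than the root has degree at most 2; equivalently, Γ is a union of simple chains emanating from the root. -/
/-- A rooted tree with edge set `E`, encoded by its parent-edge function:
`par e = some f` if `f` is the next edge on the simple path from `e` towards the
root, and `par e = none` if `e` is incident to the root.  Acyclicity (hence, for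
a finite edge set, that we really get a tree with vertex set `E ⊕ {root}`) is
guaranteed by a rank function decreasing along `par`. -/
structure EdgeRootedTree (E : Type*) where
  par : E → Option E
  wf : ∃ rank : E → ℕ, ∀ a b, par a = some b → rank b < rank a

namespace EdgeRootedTree

variable {E : Type*}

/-- `Γ.inUp e f` : the edge `f` lies on the simple path from `e` to the root
(`f` is an ancestor of `e`, or `f = e`). -/
def inUp (Γ : EdgeRootedTree E) (e f : E) : Prop :=
  Relation.ReflTransGen (fun a b => Γ.par a = some b) e f

open scoped Classical in
/-- `up(e)` : the set of edges of the simple path from `e` to the root, `e` included. -/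
noncomputable def up (Γ : EdgeRootedTree E) [Fintype E] (e : E) : Finset E :=
  Finset.univ.filter (Γ.inUp e)

/-- An edge is hanging if its lower endpoint is a leaf distinct from the root,
i.e. if it has no child edge. -/
def IsHanging (Γ : EdgeRootedTree E) (e : E) : Prop :=
  ∀ f, Γ.par f ≠ some e

open scoped Classical in
/-- The set `H` of hanging edges. -/
noncomputable def hanging (Γ : EdgeRootedTree E) [Fintype E] : Finset E :=
  Finset.univ.filter Γ.IsHanging

/-- The second asymptotic coefficient polynomial `P₂`, defined by
`2 P₂ = -(Σ_E t)² - Σ_E t² - Σ_H t² + 2 (Σ_H t)(Σ_E t) + Σ_{e∈E} Σ_{f∈up(e)} t_e t_f`. -/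
noncomputable def P2 [Fintype E] (Γ : EdgeRootedTree E) (t : E → ℝ) : ℝ :=
  (-(∑ e, t e) ^ 2 - ∑ e, t e ^ 2 - ∑ e ∈ Γ.hanging, t e ^ 2
      + 2 * (∑ e ∈ Γ.hanging, t e) * (∑ e, t e)
      + ∑ e, ∑ f ∈ Γ.up e, t e * t f) / 2

end EdgeRootedTree

/-!
If an edge `e` has two distinct child edges `f` and `g`, reattach `g` (with its whole subtree)
to the parent of `e`. Since `e` keeps its child `f`, the set of hanging edges and all edge
lengths are unchanged; the only change in `P₂` is that `e` leaves `up(x)` for every edge `x` of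
the subtree of `g`, so `2 P₂` drops by `t_e` times the total length of that subtree,
contradicting minimality (already with the identity permutation).
-/

namespace EdgeRootedTree

variable {E : Type*} (Γ : EdgeRootedTree E)

lemma par_rightUnique : Relator.RightUnique fun a b => Γ.par a = some b :=
  fun _ _ _ hab hac => Option.some.inj (hab.symm.trans hac)

lemma inUp_total {x y z : E} (hy : Γ.inUp x y) (hz : Γ.inUp x z) : Γ.inUp y z ∨ Γ.inUp z y :=
  hy.total_of_right_unique Γ.par_rightUnique hz

lemma not_inUp_of_par {a b : E} (h : Γ.par a = some b) : ¬ Γ.inUp b a := by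
  obtain ⟨rank, hrank⟩ := Γ.wf
  intro hba
  have : rank a ≤ rank b := by
    clear h
    induction hba with
    | refl => rfl
    | tail _ hstep ih => exact (hrank _ _ hstep).le.trans ih
  exact (hrank a b h).not_ge this

lemma mem_up {e f : E} [Fintype E] : f ∈ Γ.up e ↔ Γ.inUp e f := by
  classical
  simp [up]

section LiftSubtree

variable [DecidableEq E] {e g : E}

def liftSubtree (hg : Γ.par g = some e) : EdgeRootedTree E where
  par := Function.update Γ.par g (Γ.par e)
  wf := by
    obtain ⟨rank, hrank⟩ := Γ.wf
    refine ⟨rank, fun a b hab => ?_⟩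
    rcases eq_or_ne a g with rfl | hag
    · rw [Function.update_self] at hab
      exact (hrank e b hab).trans (hrank a e hg)
    · rw [Function.update_of_ne hag] at hab
      exact hrank a b hab

variable {Γ} (hg : Γ.par g = some e)
include hg

lemma liftSubtree_par_self : (Γ.liftSubtree hg).par g = Γ.par e :=
  Function.update_self _ _ _

lemma liftSubtree_par_of_ne {a : E} (ha : a ≠ g) : (Γ.liftSubtree hg).par a = Γ.par a :=
  Function.update_of_ne ha _ _

lemma inUp_of_inUp_liftSubtree {x y : E} (h : (Γ.liftSubtree hg).inUp x y) : Γ.inUp x y := by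
  induction h with
  | refl => exact .refl
  | @tail b c _ hbc ih =>
    rcases eq_or_ne b g with rfl | hbg
    · rw [liftSubtree_par_self] at hbc
      exact (ih.tail hg).tail hbc
    · rw [liftSubtree_par_of_ne hg hbg] at hbc
      exact ih.tail hbc

lemma inUp_liftSubtree_of_not_inUp {x y : E} (h : Γ.inUp x y) (hx : ¬ Γ.inUp x g) :
    (Γ.liftSubtree hg).inUp x y := by
  induction h using Relation.ReflTransGen.head_induction_on with
  | refl => exact .refl
  | @head a c hac _ ih =>
    have hag : a ≠ g := by rintro rfl; exact hx .refl
    refine .head ?_ (ih fun hc => hx (hc.head hac))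
    rwa [liftSubtree_par_of_ne hg hag]

lemma inUp_liftSubtree_of_inUp_of_inUp {x y : E} (h : Γ.inUp x y) (hy : Γ.inUp y g) :
    (Γ.liftSubtree hg).inUp x y := by
  induction h using Relation.ReflTransGen.head_induction_on with
  | refl => exact .refl
  | @head a c hac hcy ih =>
    have hag : a ≠ g := by
      rintro rfl
      cases Γ.par_rightUnique hac hg
      exact Γ.not_inUp_of_par hg (hcy.trans hy)
    refine .head ?_ ih
    rwa [liftSubtree_par_of_ne hg hag]

lemma up_liftSubtree_of_not_inUp [Fintype E] {x : E} (hx : ¬ Γ.inUp x g) :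
    (Γ.liftSubtree hg).up x = Γ.up x := by
  ext y
  simp only [mem_up]
  exact ⟨inUp_of_inUp_liftSubtree hg, fun h => inUp_liftSubtree_of_not_inUp hg h hx⟩

lemma not_inUp_liftSubtree_of_inUp {x : E} (hx : Γ.inUp x g) :
    ¬ (Γ.liftSubtree hg).inUp x e := by
  intro hxe
  have hxg := inUp_liftSubtree_of_inUp_of_inUp hg hx .refl
  rcases (Γ.liftSubtree hg).inUp_total hxg hxe with hge | heg
  · rcases hge.cases_head with rfl | ⟨c, hgc, hce⟩
    · exact Γ.not_inUp_of_par hg .refl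
    · rw [liftSubtree_par_self] at hgc
      exact Γ.not_inUp_of_par hgc (inUp_of_inUp_liftSubtree hg hce)
  · exact Γ.not_inUp_of_par hg (inUp_of_inUp_liftSubtree hg heg)

lemma inUp_liftSubtree_of_inUp_of_ne {x y : E} (hx : Γ.inUp x g) (h : Γ.inUp x y)
    (hye : y ≠ e) : (Γ.liftSubtree hg).inUp x y := by
  have hxg := inUp_liftSubtree_of_inUp_of_inUp hg hx .refl
  rcases Γ.inUp_total h hx with hyg | hgy
  · exact inUp_liftSubtree_of_inUp_of_inUp hg h hyg
  rcases hgy.cases_head with rfl | ⟨c, hgc, hcy⟩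
  · exact hxg
  cases Γ.par_rightUnique hgc hg
  obtain ⟨p, hep, hpy⟩ := hcy.cases_head.resolve_left hye.symm
  have hpg : ¬ Γ.inUp p g := fun hpg => Γ.not_inUp_of_par hep (hpg.tail hg)
  have hgp : (Γ.liftSubtree hg).par g = some p := by rwa [liftSubtree_par_self]
  exact hxg.trans (.head hgp (inUp_liftSubtree_of_not_inUp hg hpy hpg))

lemma up_liftSubtree_of_inUp [Fintype E] {x : E} (hx : Γ.inUp x g) :
    (Γ.liftSubtree hg).up x = (Γ.up x).erase e := by
  ext y
  simp only [Finset.mem_erase, mem_up]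
  constructor
  · intro h
    refine ⟨?_, inUp_of_inUp_liftSubtree hg h⟩
    rintro rfl
    exact not_inUp_liftSubtree_of_inUp hg hx h
  · exact fun ⟨hye, h⟩ => inUp_liftSubtree_of_inUp_of_ne hg hx h hye

lemma hanging_liftSubtree [Fintype E] {f : E} (hf : Γ.par f = some e) (hfg : f ≠ g) :
    (Γ.liftSubtree hg).hanging = Γ.hanging := by
  ext x
  simp only [hanging, Finset.mem_filter, Finset.mem_univ, true_and]
  constructor
  · intro h c hc
    rcases eq_or_ne c g with rfl | hcg
    · cases Γ.par_rightUnique hc hg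
      exact h f (by rwa [liftSubtree_par_of_ne hg hfg])
    · exact h c (by rwa [liftSubtree_par_of_ne hg hcg])
  · intro h c hc
    rcases eq_or_ne c g with rfl | hcg
    · rw [liftSubtree_par_self] at hc
      exact h e hc
    · rw [liftSubtree_par_of_ne hg hcg] at hc
      exact h c hc

open scoped Classical in
lemma sum_up_liftSubtree [Fintype E] {R : Type*} [CommRing R] (t : E → R) :
    ∑ x, ∑ y ∈ (Γ.liftSubtree hg).up x, t x * t y
      = ∑ x, ∑ y ∈ Γ.up x, t x * t y - ∑ x with Γ.inUp x g, t x * t e := by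
  rw [Finset.sum_filter, ← Finset.sum_sub_distrib]
  refine Finset.sum_congr rfl fun x _ => ?_
  by_cases hx : Γ.inUp x g
  · rw [if_pos hx, up_liftSubtree_of_inUp hg hx,
      Finset.sum_erase_eq_sub ((Γ.mem_up).2 (hx.tail hg))]
  · rw [if_neg hx, up_liftSubtree_of_not_inUp hg hx, sub_zero]

open scoped Classical in
lemma P2_liftSubtree [Fintype E] {f : E} (hf : Γ.par f = some e) (hfg : f ≠ g) (t : E → ℝ) :
    P2 (Γ.liftSubtree hg) t = P2 Γ t - (∑ x with Γ.inUp x g, t x * t e) / 2 := by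
  unfold P2
  rw [hanging_liftSubtree hg hf hfg, sum_up_liftSubtree hg]
  ring

end LiftSubtree

end EdgeRootedTree

open EdgeRootedTree in
/-- If the rooted tree `Γ` together with the positive edge lengths `t`
minimizes `P₂` among all rooted trees on the same edge set together with all
reassignments of the same multiset of lengths (i.e. all `t ∘ σ` for permutations `σ`),
then every vertex of `Γ` other than the root has degree at most `2`; equivalently,
every edge has at most one child edge, i.e. `Γ` is a union of simple chains
emanating from the root. -/
theorem minimal_growth_tree_is_union_of_chains
    {E : Type*} [Fintype E] (Γ : EdgeRootedTree E) (t : E → ℝ)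
    (ht : ∀ e, 0 < t e)
    (hmin : ∀ (Γ' : EdgeRootedTree E) (σ : Equiv.Perm E), P2 Γ t ≤ P2 Γ' (t ∘ σ)) :
    ∀ e f g : E, Γ.par f = some e → Γ.par g = some e → f = g := by
  classical
  intro e f g hf hg
  by_contra hfg
  have hdrop : 0 < ∑ x with Γ.inUp x g, t x * t e :=
    Finset.sum_pos (fun x _ => mul_pos (ht x) (ht e))
      ⟨g, Finset.mem_filter.2 ⟨Finset.mem_univ g, .refl⟩⟩
  have hle := hmin (Γ.liftSubtree hg) (Equiv.refl E)
  rw [Equiv.coe_refl, Function.comp_id, P2_liftSubtree hg hf hfg] at hle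
  linarith
end

section
/- Let Γ be a rooted tree with edge set E of cardinality |E| ≥ 2 and positive edge lengths t : E → ℝ, and suppose the pair (Γ, t) minimizes P₂ over all rooted trees with the same number of edges together with all assignments of the same multiset of lengths {t_e : e ∈ E} to their edges. Then no hanging edge of Γ is incident to the root; in particular, if Γ is a union of simple chains emanating from the root, each such chain contains at least 2 edges. -/
namespace EdgeRootedTree

open Finset Equiv

variable {E : Type*} (Γ : EdgeRootedTree E)

lemma eq_of_inUp_of_isHanging {q x : E} (hq : Γ.IsHanging q) (h : Γ.inUp x q) : x = q := by
  induction h using Relation.ReflTransGen.head_induction_on with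
  | refl => rfl
  | head hab _ ih => subst ih; exact absurd hab (hq _)

section Fintype

variable [Fintype E]

lemma mem_up_iff {x y : E} : y ∈ Γ.up x ↔ Γ.inUp x y := by
  simp [up]

lemma mem_hanging_iff {x : E} : x ∈ Γ.hanging ↔ Γ.IsHanging x := by
  simp [hanging]

lemma up_eq_singleton_of_par_eq_none {e : E} (hroot : Γ.par e = none) : Γ.up e = {e} := by
  ext y
  rw [mem_up_iff, mem_singleton]
  refine ⟨fun h => ?_, fun h => h ▸ .refl⟩
  rcases Relation.ReflTransGen.cases_head h with h | ⟨_, hc, _⟩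
  · exact h.symm
  · simp [hroot] at hc

lemma exists_isHanging_ne_of_par_eq_none [Nontrivial E] {e : E} (hroot : Γ.par e = none) :
    ∃ p ≠ e, Γ.IsHanging p := by
  classical
  obtain ⟨rank, hrank⟩ := Γ.wf
  obtain ⟨p, hp, hmax⟩ := (univ.erase e).exists_max_image rank
    (by simpa [← card_pos, card_erase_of_mem] using Fintype.one_lt_card)
  refine ⟨p, ne_of_mem_erase hp, fun g hg => ?_⟩
  have hge : g ≠ e := by rintro rfl; simp [hroot] at hg
  exact (hrank g p hg).not_ge (hmax g (mem_erase.2 ⟨hge, mem_univ g⟩))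

end Fintype

section Reattach

variable [DecidableEq E] {e p : E} (he : Γ.IsHanging e) (hpe : p ≠ e)

/-- The tree obtained by detaching the hanging edge `e` and letting it hang below `p`. -/
def reattach : EdgeRootedTree E where
  par x := if x = e then some p else Γ.par x
  wf := by
    obtain ⟨rank, hrank⟩ := Γ.wf
    refine ⟨fun x => if x = e then rank p + 1 else rank x, fun a b hab => ?_⟩
    by_cases ha : a = e
    · simp_all
    · have hb : b ≠ e := by rintro rfl; exact he a (by simpa [ha] using hab)
      simpa [ha, hb] using hrank a b (by simpa [ha] using hab)

lemma reattach_par_self : (Γ.reattach he hpe).par e = some p := if_pos rfl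

lemma reattach_par_of_ne {x : E} (hx : x ≠ e) : (Γ.reattach he hpe).par x = Γ.par x :=
  if_neg hx

lemma inUp_reattach_iff {x y : E} (hx : x ≠ e) :
    (Γ.reattach he hpe).inUp x y ↔ Γ.inUp x y := by
  constructor <;> intro h
  · induction h using Relation.ReflTransGen.head_induction_on with
    | refl => exact .refl
    | head hab _ ih =>
      rw [reattach_par_of_ne Γ he hpe hx] at hab
      exact .head hab (ih fun hc => he _ (hc ▸ hab))
  · induction h using Relation.ReflTransGen.head_induction_on with
    | refl => exact .refl
    | head hab _ ih =>
      exact .head (by rwa [reattach_par_of_ne Γ he hpe hx]) (ih fun hc => he _ (hc ▸ hab))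

variable [Fintype E]

lemma up_reattach_of_ne {x : E} (hx : x ≠ e) : (Γ.reattach he hpe).up x = Γ.up x := by
  ext y
  simp only [mem_up_iff, inUp_reattach_iff Γ he hpe hx]

lemma up_reattach_self : (Γ.reattach he hpe).up e = insert e (Γ.up p) := by
  ext y
  rw [mem_up_iff, mem_insert, mem_up_iff, ← inUp_reattach_iff Γ he hpe hpe]
  refine ⟨fun h => ?_, ?_⟩
  · rcases Relation.ReflTransGen.cases_head h with h | ⟨c, hc, hcy⟩
    · exact .inl h.symm
    · rw [reattach_par_self] at hc
      exact .inr (Option.some_injective _ hc ▸ hcy)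
  · rintro (rfl | h)
    · exact .refl
    · exact .head (reattach_par_self Γ he hpe) h

lemma hanging_reattach (hroot : Γ.par e = none) :
    (Γ.reattach he hpe).hanging = Γ.hanging.erase p := by
  ext x
  simp only [mem_hanging_iff, mem_erase, IsHanging]
  constructor
  · intro hx
    refine ⟨fun hxp => hx e (hxp ▸ reattach_par_self Γ he hpe), fun g hg => ?_⟩
    have hge : g ≠ e := by rintro rfl; simp [hroot] at hg
    exact hx g (by rwa [reattach_par_of_ne Γ he hpe hge])
  · rintro ⟨hxp, hx⟩ g hg
    by_cases hge : g = e
    · rw [hge, reattach_par_self] at hg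
      exact hxp (Option.some_injective _ hg).symm
    · exact hx g (by rwa [reattach_par_of_ne Γ he hpe hge] at hg)

variable {Γ}

lemma sum_hanging_reattach_swap (hroot : Γ.par e = none) (hp : Γ.IsHanging p)
    {M : Type*} [AddCommGroup M] (f : E → M) :
    ∑ x ∈ (Γ.reattach he hpe).hanging, f (swap e p x) = ∑ x ∈ Γ.hanging, f x - f e := by
  have heH : e ∈ Γ.hanging := (mem_hanging_iff Γ).2 he
  have hpH : p ∈ Γ.hanging := (mem_hanging_iff Γ).2 hp
  rw [hanging_reattach Γ he hpe hroot, sum_erase_eq_sub hpH, swap_apply_right,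
    Perm.sum_comp _ _ _ fun x hx => ?_]
  rcases (swap_apply_ne_self_iff.1 hx).2 with rfl | rfl <;> assumption

lemma sum_up_reattach_swap (hroot : Γ.par e = none) (hp : Γ.IsHanging p)
    {R : Type*} [CommRing R] (t : E → R) :
    ∑ x, ∑ y ∈ (Γ.reattach he hpe).up x, t (swap e p x) * t (swap e p y)
      = ∑ x, ∑ y ∈ Γ.up x, t x * t y + t e * ∑ y ∈ Γ.up p, t y := by
  have hep : e ∉ Γ.up p := fun h =>
    hpe (Γ.eq_of_inUp_of_isHanging he ((mem_up_iff Γ).1 h))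
  have hpp : p ∈ Γ.up p := (mem_up_iff Γ).2 .refl
  have hswap_up : ∑ y ∈ Γ.up p, t (swap e p y) = ∑ y ∈ Γ.up p, t y - t p + t e := by
    have := (swap e p).sum_comp (insert e (Γ.up p)) t fun x hx => by
      rcases (swap_apply_ne_self_iff.1 hx).2 with rfl | rfl
      exacts [mem_insert_self _ _, mem_insert_of_mem hpp]
    rw [sum_insert hep, sum_insert hep, swap_apply_left] at this
    linear_combination this
  -- Only the terms of `e` and `p` change: the paths of all other edges avoid both hanging edges.
  rw [← sub_eq_iff_eq_add', ← sum_sub_distrib, Fintype.sum_eq_add e p hpe.symm]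
  · rw [up_reattach_self, sum_insert hep, up_eq_singleton_of_par_eq_none Γ hroot,
      up_reattach_of_ne Γ he hpe hpe, sum_singleton, ← mul_sum, ← mul_sum, ← mul_sum,
      hswap_up, swap_apply_left, swap_apply_right]
    ring
  · rintro x ⟨hxe, hxp⟩
    rw [up_reattach_of_ne Γ he hpe hxe, swap_apply_of_ne_of_ne hxe hxp, sub_eq_zero]
    refine sum_congr rfl fun y hy => ?_
    have hy' := (mem_up_iff Γ).1 hy
    rw [swap_apply_of_ne_of_ne (fun h => hxe (Γ.eq_of_inUp_of_isHanging he (by rwa [h] at hy')))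
      (fun h => hxp (Γ.eq_of_inUp_of_isHanging hp (by rwa [h] at hy')))]

lemma P2_reattach_swap (hroot : Γ.par e = none) (hp : Γ.IsHanging p) (t : E → ℝ) :
    P2 (Γ.reattach he hpe) (t ∘ swap e p)
      = P2 Γ t + (t e ^ 2 - 2 * t e * ∑ x, t x + t e * ∑ y ∈ Γ.up p, t y) / 2 := by
  simp only [P2, Function.comp_apply]
  rw [Equiv.sum_comp, Equiv.sum_comp _ fun x => t x ^ 2,
    sum_hanging_reattach_swap he hpe hroot hp t,
    sum_hanging_reattach_swap he hpe hroot hp (M := ℝ) fun x => t x ^ 2,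
    sum_up_reattach_swap he hpe hroot hp]
  ring

lemma P2_reattach_swap_lt (hroot : Γ.par e = none) (hp : Γ.IsHanging p) {t : E → ℝ}
    (ht : ∀ x, 0 ≤ t x) (hte : 0 < t e) :
    P2 (Γ.reattach he hpe) (t ∘ swap e p) < P2 Γ t := by
  have hep : Γ.up p ⊆ univ.erase e := fun y hy => mem_erase.2
    ⟨fun h => hpe (Γ.eq_of_inUp_of_isHanging he (by rwa [h, mem_up_iff] at hy)), mem_univ y⟩
  have hpath : ∑ y ∈ Γ.up p, t y ≤ ∑ x, t x - t e := by
    rw [← sum_erase_eq_sub (mem_univ e)]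
    exact sum_le_sum_of_subset_of_nonneg hep fun x _ _ => ht x
  have hS : t e ≤ ∑ x, t x := single_le_sum (fun x _ => ht x) (mem_univ e)
  rw [P2_reattach_swap he hpe hroot hp]
  nlinarith [mul_le_mul_of_nonneg_left hpath hte.le]

end Reattach

end EdgeRootedTree

open EdgeRootedTree in
/-- Let `Γ` be a rooted tree with at least two edges and positive edge
lengths `t`, and suppose `(Γ, t)` minimizes `P₂` among all rooted trees on the same edge
set together with all reassignments of the same multiset of lengths (all `t ∘ σ`).
Then no hanging edge of `Γ` is incident to the root (so each chain emanating from the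
root has at least two edges). -/
theorem minimal_growth_tree_no_hanging_edge_at_root
    {E : Type*} [Fintype E] (hE : 2 ≤ Fintype.card E)
    (Γ : EdgeRootedTree E) (t : E → ℝ)
    (ht : ∀ e, 0 < t e)
    (hmin : ∀ (Γ' : EdgeRootedTree E) (σ : Equiv.Perm E), P2 Γ t ≤ P2 Γ' (t ∘ σ)) :
    ∀ e : E, Γ.IsHanging e → Γ.par e ≠ none := by
  classical
  intro e he hroot
  have : Nontrivial E := Fintype.one_lt_card_iff_nontrivial.1 hE
  obtain ⟨p, hpe, hp⟩ := Γ.exists_isHanging_ne_of_par_eq_none hroot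
  exact (P2_reattach_swap_lt he hpe hroot hp (fun x => (ht x).le) (ht e)).not_ge
    (hmin _ (Equiv.swap e p))
end

section
/- Let Γ be a rooted tree with positive edge lengths t, let b be a hanging edge incident to a vertex v, and let d be another edge incident to v lying below v (a child edge at v, d ≠ b). Let D denote the set consisting of d together with all descendants of d, and let Γ' be obtained from Γ by the transformation T2: detach the subtree spanned by D from v and reattach it at the leaf endpoint of b, keeping all edge lengths. Then 2·P₂(Γ, t) − 2·P₂(Γ', t) = −t_b · Σ_{e∈D} t_e + t_b² + 2·t_b · Σ_{e∈E, e≠b} t_e. -/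
namespace EdgeRootedTree

variable {E : Type*}

open scoped Classical in
/-- The parent function of the tree obtained from `Γ` by the transformation **T2**:
the subtree consisting of the edge `d` and all its descendants is detached from the
common upper vertex of `b` and `d` and reattached at the leaf endpoint of the hanging
edge `b`. -/
noncomputable def T2par (Γ : EdgeRootedTree E) (b d : E) : E → Option E := fun f =>
  if f = d then some b else Γ.par f

end EdgeRootedTree

/-! T2 only changes the parent of `d`, from the common upper vertex of `b` and `d` to the
leaf end of `b`. Hence `b` is the only edge that stops being hanging, and the path to the
root gains exactly the edge `b` for the edges of `D` and is unchanged for all others.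
Substituting `H' = H \ {b}` and `up'(e) = up(e) ∪ {b}` for `e ∈ D` into `2 P₂` leaves a
polynomial identity. -/

namespace EdgeRootedTree

variable {E : Type*} {Γ Γ' : EdgeRootedTree E} {b d e f : E}

theorem rank_lt_of_transGen {rank : E → ℕ} (hr : ∀ a c, Γ.par a = some c → rank c < rank a)
    (h : Relation.TransGen (fun a c => Γ.par a = some c) e f) : rank f < rank e := by
  induction h with
  | single h => exact hr _ _ h
  | tail _ h ih => exact (hr _ _ h).trans ih

theorem not_transGen_self : ¬ Relation.TransGen (fun a c => Γ.par a = some c) e e := by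
  obtain ⟨rank, hr⟩ := Γ.wf
  exact fun h => (rank_lt_of_transGen hr h).false

theorem not_inUp_of_par_eq (hd : Γ.par d = Γ.par b) (hne : d ≠ b) : ¬ Γ.inUp b d := by
  intro h
  rcases Relation.ReflTransGen.cases_head h with rfl | ⟨c, hbc, hcd⟩
  · exact hne rfl
  · exact not_transGen_self (Relation.TransGen.head' (hd.trans hbc) hcd)

theorem IsHanging.eq_of_inUp (hb : Γ.IsHanging b) (h : Γ.inUp e b) : e = b := by
  rcases Relation.ReflTransGen.cases_tail h with rfl | ⟨c, _, hcb⟩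
  · rfl
  · exact absurd hcb (hb c)

theorem par_of_T2par (hΓ' : Γ'.par = T2par Γ b d) (hf : f ≠ d) : Γ'.par f = Γ.par f := by
  simp [hΓ', T2par, hf]

theorem par_d_of_T2par (hΓ' : Γ'.par = T2par Γ b d) : Γ'.par d = some b := by
  simp [hΓ', T2par]

theorem inUp_T2_of_inUp (hd : Γ.par d = Γ.par b) (hne : d ≠ b) (hΓ' : Γ'.par = T2par Γ b d)
    (h : Γ.inUp e f) : Γ'.inUp e f := by
  induction h using Relation.ReflTransGen.head_induction_on with
  | refl => exact .refl
  | @head x c hxc _ ih =>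
    by_cases hx : x = d
    · subst hx
      have hbc : Γ'.par b = some c := (par_of_T2par hΓ' hne.symm).trans (hd ▸ hxc)
      exact .head (par_d_of_T2par hΓ') (.head hbc ih)
    · exact .head ((par_of_T2par hΓ' hx).trans hxc) ih

theorem inUp_T2_iff (hd : Γ.par d = Γ.par b) (hne : d ≠ b) (hΓ' : Γ'.par = T2par Γ b d) :
    Γ'.inUp e f ↔ Γ.inUp e f ∨ (Γ.inUp e d ∧ f = b) := by
  refine ⟨fun h => ?_, ?_⟩
  · induction h using Relation.ReflTransGen.head_induction_on with
    | refl => exact .inl .refl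
    | @head x c hxc _ ih =>
      by_cases hx : x = d
      · subst hx
        obtain rfl : c = b := (Option.some.inj ((par_d_of_T2par hΓ').symm.trans hxc)).symm
        rcases ih with hcf | ⟨hcx, -⟩
        · rcases Relation.ReflTransGen.cases_head hcf with rfl | ⟨p, hcp, hpf⟩
          · exact .inr ⟨.refl, rfl⟩
          · exact .inl (.head (hd.trans hcp) hpf)
        · exact absurd hcx (not_inUp_of_par_eq hd hne)
      · have hxc' : Γ.par x = some c := (par_of_T2par hΓ' hx).symm.trans hxc
        exact ih.imp (.head hxc' ·) (fun ⟨hcd, hfb⟩ => ⟨.head hxc' hcd, hfb⟩)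
  · rintro (h | ⟨h, rfl⟩)
    · exact inUp_T2_of_inUp hd hne hΓ' h
    · exact .tail (inUp_T2_of_inUp hd hne hΓ' h) (par_d_of_T2par hΓ')

section Finite

variable [Fintype E]

open scoped Classical

theorem up_T2 (hd : Γ.par d = Γ.par b) (hne : d ≠ b) (hΓ' : Γ'.par = T2par Γ b d) (e : E) :
    Γ'.up e = if Γ.inUp e d then insert b (Γ.up e) else Γ.up e := by
  ext f
  split_ifs with h <;> simp [up, inUp_T2_iff hd hne hΓ', h, or_comm]

theorem hanging_T2 (hd : Γ.par d = Γ.par b) (hne : d ≠ b) (hΓ' : Γ'.par = T2par Γ b d) :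
    Γ'.hanging = Γ.hanging.erase b := by
  ext e
  simp only [hanging, IsHanging, Finset.mem_erase, Finset.mem_filter, Finset.mem_univ, true_and]
  refine ⟨fun h => ⟨?_, fun f hf => ?_⟩, fun ⟨heb, he⟩ f => ?_⟩
  · rintro rfl
    exact h d (par_d_of_T2par hΓ')
  · by_cases hfd : f = d
    · subst hfd
      exact h b ((par_of_T2par hΓ' hne.symm).trans (hd ▸ hf))
    · exact h f ((par_of_T2par hΓ' hfd).trans hf)
  · by_cases hfd : f = d
    · rw [hfd, par_d_of_T2par hΓ']
      exact fun hbe => heb (Option.some.inj hbe).symm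
    · exact (par_of_T2par hΓ' hfd).trans_ne (he f)

theorem sum_up_T2 {M : Type*} [AddCommMonoid M] (hb : Γ.IsHanging b) (hd : Γ.par d = Γ.par b)
    (hne : d ≠ b) (hΓ' : Γ'.par = T2par Γ b d) (g : E → M) (e : E) :
    ∑ f ∈ Γ'.up e, g f = (if Γ.inUp e d then g b else 0) + ∑ f ∈ Γ.up e, g f := by
  rw [up_T2 hd hne hΓ' e]
  split_ifs with h
  · refine Finset.sum_insert fun hb' => not_inUp_of_par_eq hd hne ?_
    simp only [up, Finset.mem_filter, Finset.mem_univ, true_and] at hb'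
    exact hb.eq_of_inUp hb' ▸ h
  · rw [zero_add]

end Finite

end EdgeRootedTree

open EdgeRootedTree in
open scoped Classical in
theorem T2_P2_difference_general
    {E : Type*} [Fintype E] (Γ Γ' : EdgeRootedTree E) (t : E → ℝ)
    (b d : E)
    (hb : Γ.IsHanging b) (hd : Γ.par d = Γ.par b) (hne : d ≠ b)
    (hΓ' : Γ'.par = T2par Γ b d) :
    2 * P2 Γ t - 2 * P2 Γ' t =
      - (t b * ∑ e ∈ Finset.univ.filter fun f => Γ.inUp f d, t e)
        + t b ^ 2 + 2 * t b * ∑ e ∈ Finset.univ.erase b, t e := by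
  have hbH : b ∈ Γ.hanging := by simp [hanging, hb]
  have hup : ∑ e, ∑ f ∈ Γ'.up e, t e * t f =
      (∑ e ∈ Finset.univ.filter fun f => Γ.inUp f d, t e) * t b
        + ∑ e, ∑ f ∈ Γ.up e, t e * t f := by
    simp only [sum_up_T2 hb hd hne hΓ', Finset.sum_add_distrib, ← Finset.sum_filter,
      Finset.sum_mul]
  simp only [P2, hup, hanging_T2 hd hne hΓ', Finset.sum_erase_eq_sub hbH,
    Finset.sum_erase_eq_sub (Finset.mem_univ b)]
  ring

open EdgeRootedTree in
open scoped Classical in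
/-- Let `b` be a hanging edge of the rooted tree `Γ` incident to a
vertex `v`, and let `d ≠ b` be a child edge at `v` (so `d` and `b` have the same parent).
Let `D` consist of `d` together with all its descendants.  If `Γ'` is obtained from `Γ`
by the transformation T2 (keeping the edge lengths), then
`2 P₂(Γ,t) - 2 P₂(Γ',t) = - t_b Σ_{e∈D} t_e + t_b² + 2 t_b Σ_{e≠b} t_e`. -/
theorem T2_P2_difference
    {E : Type*} [Fintype E] (Γ Γ' : EdgeRootedTree E) (t : E → ℝ)
    (ht : ∀ x, 0 < t x) (b d : E)
    (hb : Γ.IsHanging b) (hd : Γ.par d = Γ.par b) (hne : d ≠ b)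
    (hΓ' : Γ'.par = T2par Γ b d) :
    2 * P2 Γ t - 2 * P2 Γ' t =
      - (t b * ∑ e ∈ Finset.univ.filter fun f => Γ.inUp f d, t e)
        + t b ^ 2 + 2 * t b * ∑ e ∈ Finset.univ.erase b, t e :=
  T2_P2_difference_general Γ Γ' t b d hb hd hne hΓ'
end

section
/- Let k ≥ 1 and let l₁, …, l_k be positive integers with l₁ + ⋯ + l_k = n, and let Γ_{l₁,…,l_k} be the rooted tree that is the union of k simple chains of l₁, …, l_k edges emanating from the root. Then, evaluating the asymmetric part T_Γ of 2·P₂ with all edge lengths equal to x > 0, one has T_{Γ_{l₁,…,l_k}}(x, …, x) = x² · [ (l₁² + ⋯ + l_k²)/2 + k·(2n − 1) + n/2 ]. -/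
namespace EdgeRootedTree

/-- The asymmetric part `T_Γ` of `2 P₂`:
`T_Γ(t) = -Σ_H t² + 2 (Σ_H t)(Σ_E t) + Σ_{e∈E} Σ_{f∈up(e)} t_e t_f`. -/
noncomputable def Tasym {E : Type*} [Fintype E] (Γ : EdgeRootedTree E) (t : E → ℝ) : ℝ :=
  -∑ e ∈ Γ.hanging, t e ^ 2 + 2 * (∑ e ∈ Γ.hanging, t e) * (∑ e, t e)
    + ∑ e, ∑ f ∈ Γ.up e, t e * t f

/-- The rooted tree `Γ_{l₁,…,l_k}` that is the union of `k` simple chains with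
`l 0, …, l (k-1)` edges respectively, all emanating from the root: the edges are the
pairs `⟨i, j⟩` (`j`-th edge of the `i`-th chain, counted from the root), and the parent
of `⟨i, j⟩` is `⟨i, j-1⟩` for `j > 0`, while edges `⟨i, 0⟩` are incident to the root. -/
def starOfChains (k : ℕ) (l : Fin k → ℕ) : EdgeRootedTree (Σ i : Fin k, Fin (l i)) where
  par := fun p =>
    if h : (p.2 : ℕ) = 0 then none
    else some ⟨p.1, ⟨(p.2 : ℕ) - 1, lt_of_le_of_lt (Nat.pred_le _) p.2.isLt⟩⟩
  wf := by
    refine ⟨fun p => (p.2 : ℕ), ?_⟩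
    rintro ⟨i, j⟩ b h
    dsimp only at h
    split at h
    · exact absurd h (by simp)
    · rename_i hj
      obtain rfl := (Option.some.injEq _ _ ▸ h).symm
      exact Nat.sub_lt (Nat.pos_of_ne_zero hj) one_pos

end EdgeRootedTree

/-!
With all edge lengths equal to `x`, `T_Γ` is `x²` times the integer
`2 |H| |E| - |H| + Σ_e |up(e)|`. In `Γ_{l₁,…,l_k}` every chain contributes exactly one
hanging edge, `|E| = n`, and the `j`-th edge of a chain (counted from the root) has
`|up| = j`, so `Σ_e |up(e)| = Σ_i l_i (l_i + 1) / 2`.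
-/

theorem Finset.sum_range_succ_mul_two (m : ℕ) : (∑ j ∈ range m, (j + 1)) * 2 = m * (m + 1) := by
  induction m with
  | zero => rfl
  | succ m ih => rw [sum_range_succ, add_mul, ih]; ring

namespace EdgeRootedTree

open Finset

theorem Tasym_const {E : Type*} [Fintype E] (Γ : EdgeRootedTree E) (x : ℝ) :
    Γ.Tasym (fun _ => x) =
      x ^ 2 * (2 * #Γ.hanging * Fintype.card E - #Γ.hanging + ∑ e, (#(Γ.up e) : ℝ)) := by
  simp only [Tasym, sum_const, nsmul_eq_mul, card_univ]
  rw [← sum_mul]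
  ring

variable {k : ℕ} {l : Fin k → ℕ}

theorem starOfChains_par_eq_some_iff {p q : Σ i, Fin (l i)} :
    (starOfChains k l).par p = some q ↔ q.1 = p.1 ∧ (q.2 : ℕ) + 1 = p.2 := by
  obtain ⟨i, j⟩ := p
  obtain ⟨i', j'⟩ := q
  simp only [starOfChains]
  split_ifs with hj
  · simp only [false_iff, not_and]
    omega
  · simp only [Option.some.injEq, Sigma.mk.inj_iff]
    constructor
    · rintro ⟨rfl, h⟩
      rw [heq_iff_eq, Fin.ext_iff] at h
      exact ⟨rfl, by simp only at h; omega⟩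
    · rintro ⟨rfl, h⟩
      exact ⟨rfl, heq_of_eq (Fin.ext (by simp only; omega))⟩

theorem starOfChains_inUp_iff {p q : Σ i, Fin (l i)} :
    (starOfChains k l).inUp p q ↔ q.1 = p.1 ∧ (q.2 : ℕ) ≤ p.2 := by
  constructor
  · intro h
    induction h with
    | refl => exact ⟨rfl, le_rfl⟩
    | tail _ hstep ih =>
      obtain ⟨hi, hj⟩ := starOfChains_par_eq_some_iff.1 hstep
      exact ⟨hi.trans ih.1, by omega⟩
  · obtain ⟨i, j⟩ := p
    obtain ⟨i', j'⟩ := q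
    rintro ⟨hi, hle⟩
    dsimp only at hi hle
    subst hi
    obtain ⟨d, hd⟩ := Nat.exists_eq_add_of_le hle
    induction d generalizing j with
    | zero =>
      obtain rfl : j = j' := Fin.ext hd
      exact .refl
    | succ d ih =>
      have hlt : (j' : ℕ) + d < l i' := by omega
      exact .head (b := ⟨i', ⟨j' + d, hlt⟩⟩)
        (starOfChains_par_eq_some_iff.2 ⟨rfl, by simp only; omega⟩)
        (ih ⟨j' + d, hlt⟩ (by simp) rfl)

theorem starOfChains_up (i : Fin k) (j : Fin (l i)) :
    (starOfChains k l).up ⟨i, j⟩ = (Iic j).map (.sigmaMk i) := by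
  ext ⟨i', j'⟩
  simp only [up, mem_filter, mem_univ, true_and, starOfChains_inUp_iff, mem_map, mem_Iic,
    Function.Embedding.sigmaMk_apply]
  constructor
  · rintro ⟨rfl, hle⟩
    exact ⟨j', hle, rfl⟩
  · rintro ⟨a, hle, ⟨⟩⟩
    exact ⟨rfl, hle⟩

theorem starOfChains_isHanging_iff {p : Σ i, Fin (l i)} :
    (starOfChains k l).IsHanging p ↔ (p.2 : ℕ) + 1 = l p.1 := by
  obtain ⟨i, j⟩ := p
  simp only [IsHanging, ne_eq, starOfChains_par_eq_some_iff, not_and]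
  constructor
  · intro h
    by_contra hne
    exact h ⟨i, ⟨j + 1, by omega⟩⟩ rfl rfl
  · rintro h ⟨i', j'⟩ rfl
    simp only
    omega

theorem card_hanging_starOfChains (hl : ∀ i, 1 ≤ l i) : #(starOfChains k l).hanging = k := by
  have hfiber (i : Fin k) : #{j : Fin (l i) | (j : ℕ) + 1 = l i} = 1 := by
    have := hl i
    refine card_eq_one.2 ⟨⟨l i - 1, by omega⟩, ?_⟩
    ext j
    simp only [mem_filter, mem_univ, true_and, mem_singleton, Fin.ext_iff]
    omega
  rw [hanging, card_filter, Fintype.sum_sigma]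
  simp only [starOfChains_isHanging_iff, ← card_filter, hfiber, sum_const, card_univ,
    Fintype.card_fin, smul_eq_mul, mul_one]

theorem sum_card_up_starOfChains :
    (∑ p, #((starOfChains k l).up p)) * 2 = ∑ i, l i * (l i + 1) := by
  rw [Fintype.sum_sigma, sum_mul]
  refine sum_congr rfl fun i _ => ?_
  simp only [starOfChains_up, card_map, Fin.card_Iic]
  rw [Fin.sum_univ_eq_sum_range (· + 1), sum_range_succ_mul_two]

end EdgeRootedTree

open EdgeRootedTree in
theorem Tasym_starOfChains_general
    (k : ℕ) (l : Fin k → ℕ) (hl : ∀ i, 1 ≤ l i)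
    (n : ℕ) (hn : ∑ i, l i = n) (x : ℝ) :
    Tasym (starOfChains k l) (fun _ => x) =
      x ^ 2 * ((∑ i, (l i : ℝ) ^ 2) / 2 + k * (2 * n - 1) + n / 2) := by
  have hup : (∑ p, (((starOfChains k l).up p).card : ℝ)) * 2 = ∑ i, (l i : ℝ) ^ 2 + n := by
    rw [← hn]
    push_cast
    simp only [sq, ← Finset.sum_add_distrib, ← mul_add_one]
    exact_mod_cast sum_card_up_starOfChains
  rw [Tasym_const, card_hanging_starOfChains hl, Fintype.card_sigma]
  simp only [Fintype.card_fin, hn]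
  linear_combination x ^ 2 / 2 * hup

open EdgeRootedTree in
/-- For `k ≥ 1` and positive chain lengths `l₁,…,l_k` summing to `n`,
evaluating the asymmetric part `T_Γ` of `2 P₂` for the star of chains `Γ_{l₁,…,l_k}`
at equal edge lengths `x > 0` gives
`T(x,…,x) = x² ((l₁²+⋯+l_k²)/2 + k (2n-1) + n/2)`. -/
theorem Tasym_starOfChains
    (k : ℕ) (hk : 1 ≤ k) (l : Fin k → ℕ) (hl : ∀ i, 1 ≤ l i)
    (n : ℕ) (hn : ∑ i, l i = n) (x : ℝ) (hx : 0 < x) :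
    Tasym (starOfChains k l) (fun _ => x) =
      x ^ 2 * ((∑ i, (l i : ℝ) ^ 2) / 2 + k * (2 * n - 1) + n / 2) :=
  Tasym_starOfChains_general k l hl n hn x
end

section
/- For every integer d ≥ 2 there exists N such that for all n ≥ N the following holds: for every k with 1 ≤ k < d and every partition of n into k positive integer parts l₁, …, l_k, the quantity f(l₁,…,l_k) = (l₁² + ⋯ + l_k²)/2 + k·(2n − 1) + n/2 is strictly greater than the minimum of f(m₁,…,m_d) over all partitions of n into d positive integer parts m₁, …, m_d. Consequently, among the star-of-chains graphs Γ_{l₁,…,l_k} with n edges of equal length and at most d chains, no graph with fewer than d chains minimizes T_Γ evaluated at equal edge lengths. -/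
/-!
Split `n` as evenly as possible into `d` parts: the sum of squares `T` of the parts
satisfies `d * T ≤ n² + d²`, whereas by Cauchy–Schwarz any split into `k ≤ d - 1` parts
has sum of squares `S ≥ n² / (d - 1)`. The gap `S - T ≳ n² / (d (d - 1))` is quadratic
in `n`, so for `n ≥ 4 d³` it beats the linear cost `(d - k)(2n - 1)` of the extra chains.
-/

open Finset

def balancedPartition (d n : ℕ) (i : Fin d) : ℕ := n / d + if (i : ℕ) < n % d then 1 else 0

namespace balancedPartition

variable {d : ℕ} (n : ℕ)

lemma one_le (hdn : d ≤ n) (i : Fin d) : 1 ≤ balancedPartition d n i :=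
  (Nat.div_pos hdn i.pos).trans_le (Nat.le_add_right _ _)

lemma card_lt_mod (hd : 0 < d) : #{i : Fin d | (i : ℕ) < n % d} = n % d := by
  rw [Fin.card_filter_val_lt, min_eq_right (Nat.mod_lt n hd).le]

lemma sum_eq (hd : 0 < d) : ∑ i, balancedPartition d n i = n := by
  simp only [balancedPartition, sum_add_distrib, sum_const, card_univ, Fintype.card_fin,
    smul_eq_mul, sum_boole, card_lt_mod n hd, Nat.cast_id, Nat.div_add_mod]

lemma sum_sq_eq (hd : 0 < d) :
    ∑ i, balancedPartition d n i ^ 2 = d * (n / d) ^ 2 + (2 * (n / d) + 1) * (n % d) := by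
  have hsq (i : Fin d) : balancedPartition d n i ^ 2
      = (n / d) ^ 2 + (2 * (n / d) + 1) * if (i : ℕ) < n % d then 1 else 0 := by
    unfold balancedPartition; split_ifs <;> ring
  simp only [hsq, sum_add_distrib, sum_const, card_univ, Fintype.card_fin, smul_eq_mul,
    ← mul_sum, sum_boole, card_lt_mod n hd, Nat.cast_id]

lemma mul_sum_sq_le (hd : 0 < d) : d * ∑ i, balancedPartition d n i ^ 2 ≤ n ^ 2 + d ^ 2 := by
  have key (q r : ℕ) (hr : r ≤ d) :
      d * (d * q ^ 2 + (2 * q + 1) * r) ≤ (d * q + r) ^ 2 + d ^ 2 := by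
    nlinarith [Nat.mul_le_mul_left d hr]
  simpa only [sum_sq_eq n hd, Nat.div_add_mod] using key (n / d) (n % d) (Nat.mod_lt n hd).le

end balancedPartition

lemma value_lt_of_sum_sq_bounds {d k n S T : ℝ} (hk : 1 ≤ k) (hkd : k + 1 ≤ d)
    (hn : 4 * d ^ 3 ≤ n) (hS : n ^ 2 ≤ k * S) (hT : d * T ≤ n ^ 2 + d ^ 2) :
    T / 2 + d * (2 * n - 1) + n / 2 < S / 2 + k * (2 * n - 1) + n / 2 := by
  have hd : 2 ≤ d := by linarith
  have hdn : d ≤ n := by nlinarith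
  have hS' : n ^ 2 ≤ (d - 1) * S := hS.trans (by nlinarith)
  have hcost : (d - k) * (2 * n - 1) ≤ (d - 1) * (2 * n - 1) := by gcongr; linarith
  have hlarge : (d - 1) * d ^ 2 + 2 * d * (d - 1) ^ 2 * (2 * n - 1) < n ^ 2 := by
    have : 4 * d ^ 3 * n ≤ n ^ 2 := by nlinarith
    have : d ^ 3 ≤ 4 * d * (2 * d - 1) * n := by
      nlinarith [mul_le_mul_of_nonneg_left hdn (by nlinarith : 0 ≤ 4 * d * (2 * d - 1))]
    nlinarith
  have hpos : 0 < d * (d - 1) := by nlinarith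
  suffices T + 2 * (d - k) * (2 * n - 1) < S by linarith
  refine lt_of_mul_lt_mul_left ?_ hpos.le
  nlinarith

theorem few_chains_not_minimal_general (d : ℕ) :
    ∃ N : ℕ, ∀ n ≥ N, ∀ k : ℕ, 1 ≤ k → k < d →
      ∀ l : Fin k → ℕ, (∀ i, 1 ≤ l i) → ∑ i, l i = n →
        ∃ m : Fin d → ℕ, (∀ i, 1 ≤ m i) ∧ ∑ i, m i = n ∧
          (∑ i, (m i : ℝ) ^ 2) / 2 + d * (2 * n - 1) + n / 2 <
            (∑ i, (l i : ℝ) ^ 2) / 2 + k * (2 * n - 1) + n / 2 := by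
  refine ⟨4 * d ^ 3, fun n hn k hk hkd l _ hsum => ?_⟩
  have hd : 0 < d := by omega
  have hdn : d ≤ n := (Nat.le_self_pow (by norm_num : 3 ≠ 0) d).trans (by omega)
  have hS : n ^ 2 ≤ k * ∑ i, l i ^ 2 := by
    simpa [← hsum] using sq_sum_le_card_mul_sum_sq (s := univ) (f := l)
  have hT := balancedPartition.mul_sum_sq_le n hd
  refine ⟨balancedPartition d n, balancedPartition.one_le n hdn,
    balancedPartition.sum_eq n hd, ?_⟩
  exact value_lt_of_sum_sq_bounds (by exact_mod_cast hk) (by exact_mod_cast hkd)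
    (by exact_mod_cast hn) (by exact_mod_cast hS) (by exact_mod_cast hT)

/-- For every `d ≥ 2` there is `N` such that for all `n ≥ N`:
for every `k` with `1 ≤ k < d` and every partition of `n` into `k` positive parts
`l₁,…,l_k`, the quantity `f(l) = (l₁²+⋯+l_k²)/2 + k(2n-1) + n/2` (which is the value of
the asymmetric part `T_Γ` of `2 P₂` for the star of chains `Γ_{l₁,…,l_k}` at unit edge
lengths) is strictly greater than the minimum of `f(m)` over all partitions
`m₁,…,m_d` of `n` into `d` positive parts; i.e. some partition of `n` into `d` positive
parts has strictly smaller `f`-value.  Consequently no star of chains with fewer than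
`d` chains minimizes `T_Γ` at equal edge lengths. -/
theorem few_chains_not_minimal (d : ℕ) (hd : 2 ≤ d) :
    ∃ N : ℕ, ∀ n ≥ N, ∀ k : ℕ, 1 ≤ k → k < d →
      ∀ l : Fin k → ℕ, (∀ i, 1 ≤ l i) → ∑ i, l i = n →
        ∃ m : Fin d → ℕ, (∀ i, 1 ≤ m i) ∧ ∑ i, m i = n ∧
          (∑ i, (m i : ℝ) ^ 2) / 2 + d * (2 * n - 1) + n / 2 <
            (∑ i, (l i : ℝ) ^ 2) / 2 + k * (2 * n - 1) + n / 2 :=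
  few_chains_not_minimal_general d
end

section
/- Among all partitions of 24 into positive integer parts l₁ ≥ ⋯ ≥ l_k, the function f(l₁,…,l_k) = (l₁² + ⋯ + l_k²)/2 + k·47 + 12 attains its minimum uniquely at the partition (8, 8, 8), i.e., at k = 3 with all parts equal to 8 (where the minimal value is 249). Consequently, among the star-of-chains graphs with 24 edges of equal length, the one consisting of exactly three chains of 8 edges each minimizes T_Γ evaluated at equal edge lengths. -/
/-!
Expanding `∑ (lᵢ - c)² ≥ 0` gives the tangent bound `∑ lᵢ² ≥ 2c·24 - c²k` for every `c`.
With `c = 12` this shows `f ≥ 300 - 25k ≥ 250` when `k ≤ 2`; with `c = 8` it shows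
`f ≥ 204 + 15k`, which is `≥ 249` with equality only if `k = 3` and every `lᵢ = 8`.
-/

open Finset

section TangentBound

variable {ι R : Type*} (s : Finset ι) (x : ι → R)

theorem Finset.sum_sub_sq [CommRing R] (c : R) :
    ∑ i ∈ s, (x i - c) ^ 2 = ∑ i ∈ s, x i ^ 2 - 2 * c * ∑ i ∈ s, x i + #s * c ^ 2 := by
  simp only [sub_sq, sum_add_distrib, sum_sub_distrib, sum_const, nsmul_eq_mul, ← sum_mul,
    ← mul_sum]
  ring

variable [CommRing R] [LinearOrder R] [IsStrictOrderedRing R]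

theorem Finset.two_mul_mul_sum_sub_card_mul_sq_le_sum_sq (c : R) :
    2 * c * ∑ i ∈ s, x i - #s * c ^ 2 ≤ ∑ i ∈ s, x i ^ 2 := by
  have := sum_nonneg fun i (_ : i ∈ s) => sq_nonneg (x i - c)
  rw [sum_sub_sq] at this
  linarith

theorem Finset.eq_of_sum_sq_eq_two_mul_mul_sum_sub_card_mul_sq {c : R}
    (h : ∑ i ∈ s, x i ^ 2 = 2 * c * ∑ i ∈ s, x i - #s * c ^ 2) : ∀ i ∈ s, x i = c := by
  have hzero : ∑ i ∈ s, (x i - c) ^ 2 = 0 := by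
    rw [sum_sub_sq, h]
    ring
  intro i hi
  have := (sum_eq_zero_iff_of_nonneg fun j _ => sq_nonneg (x j - c)).mp hzero i hi
  exact sub_eq_zero.mp (pow_eq_zero_iff two_ne_zero |>.mp this)

end TangentBound

section StarOfChains

variable {k : ℕ} {l : Fin k → ℝ}

/-- `T_Γ` at unit edge lengths for the star of chains with lengths `l`, when `∑ l = 24`. -/
noncomputable def starOfChainsT (l : Fin k → ℝ) : ℝ :=
  (∑ i, l i ^ 2) / 2 + 47 * k + 12

theorem starOfChainsT_ge_of_le_two (hl : ∑ i, l i = 24) (hk : k ≤ 2) :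
    250 ≤ starOfChainsT l := by
  have := univ.two_mul_mul_sum_sub_card_mul_sq_le_sum_sq l 12
  rw [hl, card_univ, Fintype.card_fin] at this
  have hkR : (k : ℝ) ≤ 2 := by exact_mod_cast hk
  unfold starOfChainsT
  linarith

theorem starOfChainsT_ge_of_three_le (hl : ∑ i, l i = 24) :
    204 + 15 * k ≤ starOfChainsT l := by
  have := univ.two_mul_mul_sum_sub_card_mul_sq_le_sum_sq l 8
  rw [hl, card_univ, Fintype.card_fin] at this
  unfold starOfChainsT
  linarith

theorem starOfChainsT_ge (hl : ∑ i, l i = 24) : 249 ≤ starOfChainsT l := by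
  rcases le_or_gt k 2 with hk | hk
  · linarith [starOfChainsT_ge_of_le_two hl hk]
  · have hkR : (3 : ℝ) ≤ k := by exact_mod_cast hk
    linarith [starOfChainsT_ge_of_three_le hl]

theorem eq_eight_of_starOfChainsT_eq (hl : ∑ i, l i = 24) (h : starOfChainsT l = 249) :
    k = 3 ∧ ∀ i, l i = 8 := by
  have hk : k = 3 := by
    rcases le_or_gt k 2 with hk | hk
    · linarith [starOfChainsT_ge_of_le_two hl hk]
    · by_contra hk3
      have hkR : (4 : ℝ) ≤ k := by exact_mod_cast (show 4 ≤ k by omega)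
      linarith [starOfChainsT_ge_of_three_le hl]
  subst hk
  refine ⟨rfl, fun i => univ.eq_of_sum_sq_eq_two_mul_mul_sum_sub_card_mul_sq l ?_ i (mem_univ i)⟩
  unfold starOfChainsT at h
  rw [hl, card_univ, Fintype.card_fin]
  norm_num at h ⊢
  linarith

end StarOfChains

/-- Among all partitions of `24` into `k` positive integer parts
`l₁,…,l_k`, the function `f(l) = (l₁²+⋯+l_k²)/2 + 47 k + 12` (which is the value of the
asymmetric part `T_Γ` of `2 P₂` for the star of chains `Γ_{l₁,…,l_k}` with `24` edges at
unit edge lengths) attains its minimum, which equals `249`, uniquely at the partition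
`(8,8,8)` — i.e. at `k = 3` with all parts equal to `8`. -/
theorem star_of_three_chains_of_eight_minimizes :
    (∑ _i : Fin 3, ((8 : ℕ) : ℝ) ^ 2) / 2 + 47 * (3 : ℕ) + 12 = 249 ∧
    ∀ (k : ℕ) (l : Fin k → ℕ), (∀ i, 1 ≤ l i) → ∑ i, l i = 24 →
      (249 : ℝ) ≤ (∑ i, (l i : ℝ) ^ 2) / 2 + 47 * k + 12 ∧
      ((∑ i, (l i : ℝ) ^ 2) / 2 + 47 * k + 12 = 249 → k = 3 ∧ ∀ i, l i = 8) := by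
  refine ⟨by norm_num, fun k l _ hsum => ?_⟩
  have hl : ∑ i, (l i : ℝ) = 24 := by exact_mod_cast hsum
  refine ⟨starOfChainsT_ge hl, fun h => ?_⟩
  obtain ⟨hk, h8⟩ := eq_eight_of_starOfChainsT_eq hl h
  exact ⟨hk, fun i => by exact_mod_cast h8 i⟩
end
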